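/- arXiv:2401.18033 — 4 statements merged into one kernel-verified Lean document; each statement's English description precedes it below -/
import Mathlib

section
/- Let I(ε) := ∫_{ε}^{1} (1/y)·(1/√(−ln(y+ε) + ln 2) − 1/√(−ln y + ln 2)) dy. Then I(ε) → 0 as ε → 0⁺. -/
open Real Set Filter Topology MeasureTheory

/-!
The integrand is nonnegative. Writing `A = log 2 - log (y + ε)` and `B = log 2 - log y`, the bounds
`1/√A - 1/√B ≤ (B - A) / (2 A √A)` and `B - A ≤ ε / y` give
`integrand ≤ ε / (2 y² A √A)`. Split the integral at `√ε`: on `[ε, √ε]` we have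
`A ≥ -log ε / 2`, so that piece is at most `(1/2) (-log ε / 2)^(-3/2)`; on `[√ε, 1]` we have
`A ≥ log 2 - log (1 + ε)`, so that piece is `O(√ε)`. Both tend to `0`.
-/

lemma one_div_sqrt_sub_one_div_sqrt_le {a b : ℝ} (ha : 0 < a) (hab : a ≤ b) :
    1 / √a - 1 / √b ≤ (b - a) / (2 * a * √a) := by
  have hsa : 0 < √a := sqrt_pos.2 ha
  have hsab : √a ≤ √b := sqrt_le_sqrt hab
  have hsb : 0 < √b := hsa.trans_le hsab
  have ha2 : √a * √a = a := mul_self_sqrt ha.le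
  have hb2 : √b * √b = b := mul_self_sqrt (ha.le.trans hab)
  -- the denominator `(√b + √a) √a √b` is at least `2 a √a` since `√a ≤ √b`
  have key : 1 / √a - 1 / √b = (b - a) / ((√b + √a) * (√a * √b)) := by
    rw [eq_div_iff (by positivity)]
    field_simp
    linear_combination hb2 - ha2
  rw [key]
  exact div_le_div_of_nonneg_left (by linarith) (by positivity) (by nlinarith)

lemma log_add_sub_log_le {y ε : ℝ} (hy : 0 < y) (hε : 0 ≤ ε) :
    log (y + ε) - log y ≤ ε / y := by
  rw [← log_div (by positivity) hy.ne']
  calc log ((y + ε) / y) ≤ (y + ε) / y - 1 := log_le_sub_one_of_pos (by positivity)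
    _ = ε / y := by field_simp; ring

lemma integral_inv_sq {p q : ℝ} (hp : 0 < p) (hpq : p ≤ q) :
    ∫ y in p..q, (y ^ 2)⁻¹ = p⁻¹ - q⁻¹ := by
  have h0 : (0 : ℝ) ∉ uIcc p q := by
    rw [uIcc_of_le hpq]; exact fun h => hp.not_ge h.1
  have := integral_zpow (a := p) (b := q) (n := -2) (Or.inr ⟨by norm_num, h0⟩)
  norm_num at this
  rw [this]
  ring

lemma neg_log_add_log_two_pos {x : ℝ} (hx0 : 0 < x) (hx2 : x < 2) : 0 < -log x + log 2 := by
  linarith [log_lt_log hx0 hx2]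

noncomputable def integrand (ε y : ℝ) : ℝ :=
  (1 / y) * (1 / √(-log (y + ε) + log 2) - 1 / √(-log y + log 2))

section

variable {ε y p q m : ℝ}

lemma integrand_nonneg (hε : 0 ≤ ε) (hy : 0 < y) (hA : 0 < -log (y + ε) + log 2) :
    0 ≤ integrand ε y := by
  have hAB : -log (y + ε) + log 2 ≤ -log y + log 2 := by
    linarith [log_le_log hy (le_add_of_nonneg_right hε)]
  have : 1 / √(-log y + log 2) ≤ 1 / √(-log (y + ε) + log 2) :=
    one_div_le_one_div_of_le (sqrt_pos.2 hA) (sqrt_le_sqrt hAB)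
  exact mul_nonneg (by positivity) (sub_nonneg.2 this)

lemma integrand_le (hε : 0 ≤ ε) (hy : 0 < y) (hm : 0 < m)
    (hmA : m ≤ -log (y + ε) + log 2) :
    integrand ε y ≤ ε * (m * √m)⁻¹ / 2 * (y ^ 2)⁻¹ := by
  set A := -log (y + ε) + log 2
  set B := -log y + log 2
  have hA : 0 < A := hm.trans_le hmA
  have hlog := log_add_sub_log_le hy hε
  have hAB : A ≤ B := by linarith [log_le_log hy (le_add_of_nonneg_right hε)]
  have hK : (A * √A)⁻¹ ≤ (m * √m)⁻¹ :=
    inv_anti₀ (by positivity) (mul_le_mul hmA (sqrt_le_sqrt hmA) (sqrt_nonneg m) hA.le)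
  calc integrand ε y ≤ y⁻¹ * ((B - A) / (2 * A * √A)) := by
        rw [integrand, one_div y]
        exact mul_le_mul_of_nonneg_left (one_div_sqrt_sub_one_div_sqrt_le hA hAB)
          (by positivity)
    _ ≤ y⁻¹ * ((ε / y) / (2 * A * √A)) := by gcongr; linarith
    _ = ε * (A * √A)⁻¹ / 2 * (y ^ 2)⁻¹ := by field_simp
    _ ≤ ε * (m * √m)⁻¹ / 2 * (y ^ 2)⁻¹ := by gcongr

lemma continuousOn_integrand (hε : 0 ≤ ε) (hp : 0 < p)
    (hA : ∀ y ∈ Icc p q, 0 < -log (y + ε) + log 2) :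
    ContinuousOn (integrand ε) (Icc p q) := by
  have hy : ∀ y ∈ Icc p q, 0 < y := fun y h => hp.trans_le h.1
  have hB : ∀ y ∈ Icc p q, 0 < -log y + log 2 := fun y h => by
    linarith [hA y h, log_le_log (hy y h) (le_add_of_nonneg_right hε)]
  unfold integrand
  refine (continuousOn_const.div continuousOn_id fun y h => (hy y h).ne').mul
    ((continuousOn_const.div ?_ fun y h => (sqrt_pos.2 (hA y h)).ne').sub
      (continuousOn_const.div ?_ fun y h => (sqrt_pos.2 (hB y h)).ne'))
  · exact ((ContinuousOn.log (f := (· + ε)) (by fun_prop) fun y h =>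
      (add_pos_of_pos_of_nonneg (hy y h) hε).ne').neg.add continuousOn_const).sqrt
  · exact ((continuousOn_log.mono fun y h => (hy y h).ne').neg.add continuousOn_const).sqrt

lemma intervalIntegrable_integrand (hε : 0 ≤ ε) (hp : 0 < p) (hpq : p ≤ q)
    (hA : ∀ y ∈ Icc p q, 0 < -log (y + ε) + log 2) :
    IntervalIntegrable (integrand ε) volume p q :=
  (continuousOn_integrand hε hp hA).intervalIntegrable_of_Icc hpq

lemma integral_integrand_le (hε : 0 ≤ ε) (hp : 0 < p) (hpq : p ≤ q) (hm : 0 < m)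
    (hmA : ∀ y ∈ Icc p q, m ≤ -log (y + ε) + log 2) :
    ∫ y in p..q, integrand ε y ≤ ε * (m * √m)⁻¹ / 2 * p⁻¹ := by
  calc ∫ y in p..q, integrand ε y
        ≤ ∫ y in p..q, ε * (m * √m)⁻¹ / 2 * (y ^ 2)⁻¹ := by
        refine intervalIntegral.integral_mono_on hpq
          (intervalIntegrable_integrand hε hp hpq fun y hy => hm.trans_le (hmA y hy)) ?_
          fun y hy => integrand_le hε (hp.trans_le hy.1) hm (hmA y hy)
        refine (continuousOn_const.mul (ContinuousOn.inv₀ (by fun_prop) fun y h => ?_)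
          ).intervalIntegrable_of_Icc hpq
        exact pow_ne_zero 2 (hp.trans_le h.1).ne'
    _ = ε * (m * √m)⁻¹ / 2 * (p⁻¹ - q⁻¹) := by
        rw [intervalIntegral.integral_const_mul, integral_inv_sq hp hpq]
    _ ≤ ε * (m * √m)⁻¹ / 2 * p⁻¹ := by
        gcongr
        exact sub_le_self _ (inv_nonneg.2 (hp.le.trans hpq))

lemma integral_integrand_le_of_lt_one (hε0 : 0 < ε) (hε1 : ε < 1) :
    ∫ y in ε..1, integrand ε y ≤ 1 / 2 * ((-log ε / 2) * √(-log ε / 2))⁻¹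
      + √ε / 2 * ((-log (1 + ε) + log 2) * √(-log (1 + ε) + log 2))⁻¹ := by
  set s := √ε
  have hs0 : 0 < s := sqrt_pos.2 hε0
  have hss : s ^ 2 = ε := sq_sqrt hε0.le
  have hs1 : s ≤ 1 := sqrt_le_one.2 hε1.le
  have hεs : ε ≤ s := by nlinarith
  have hA : ∀ y ∈ Icc ε 1, 0 < -log (y + ε) + log 2 := fun y hy =>
    neg_log_add_log_two_pos (by linarith [hy.1]) (by linarith [hy.2])
  have hm : 0 < -log ε / 2 := by linarith [log_neg hε0 hε1]
  have hc : 0 < -log (1 + ε) + log 2 := hA 1 ⟨hε1.le, le_rfl⟩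
  -- near `0` we use `y + ε ≤ 2y`, away from it `y + ε ≤ 1 + ε`
  have hmA : ∀ y ∈ Icc ε s, -log ε / 2 ≤ -log (y + ε) + log 2 := fun y hy => by
    have hy0 : 0 < y := hε0.trans_le hy.1
    have h1 : log (y + ε) ≤ log 2 + log y := by
      rw [← log_mul two_ne_zero hy0.ne']; exact log_le_log (by linarith) (by linarith [hy.1])
    linarith [log_le_log hy0 hy.2, log_sqrt hε0.le]
  have hcA : ∀ y ∈ Icc s 1, -log (1 + ε) + log 2 ≤ -log (y + ε) + log 2 := fun y hy => by
    linarith [log_le_log (by linarith [hy.1]) (by linarith [hy.2] : y + ε ≤ 1 + ε)]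
  have hsplit := intervalIntegral.integral_add_adjacent_intervals
    (intervalIntegrable_integrand hε0.le hε0 hεs fun y hy => hA y ⟨hy.1, hy.2.trans hs1⟩)
    (intervalIntegrable_integrand hε0.le hs0 hs1 fun y hy => hA y ⟨hεs.trans hy.1, hy.2⟩)
  have h1 := integral_integrand_le hε0.le hε0 hεs hm hmA
  have h2 := integral_integrand_le hε0.le hs0 hs1 hc hcA
  rw [← hsplit]
  refine (add_le_add h1 h2).trans_eq (congrArg₂ _ ?_ ?_)
  · field_simp
  · field_simp
    rw [hss]

lemma tendsto_integral_bound :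
    Tendsto (fun ε => 1 / 2 * ((-log ε / 2) * √(-log ε / 2))⁻¹
      + √ε / 2 * ((-log (1 + ε) + log 2) * √(-log (1 + ε) + log 2))⁻¹)
      (𝓝[>] 0) (𝓝 0) := by
  have hm : Tendsto (fun ε => -log ε / 2) (𝓝[>] 0) atTop :=
    (tendsto_neg_atBot_atTop.comp tendsto_log_nhdsGT_zero).atTop_div_const two_pos
  have h1 := ((hm.atTop_mul_atTop₀ (tendsto_sqrt_atTop.comp hm)).inv_tendsto_atTop).const_mul
    (1 / 2 : ℝ)
  have h2 : ContinuousAt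
      (fun ε => √ε / 2 * ((-log (1 + ε) + log 2) * √(-log (1 + ε) + log 2))⁻¹) 0 := by
    fun_prop (disch := (norm_num; try positivity))
  simpa using h1.add (h2.tendsto.mono_left nhdsWithin_le_nhds)

end

open Real in
theorem stmt_6 :
    Filter.Tendsto
      (fun ε : ℝ => ∫ y in ε..1,
        (1 / y) * (1 / Real.sqrt (-Real.log (y + ε) + Real.log 2)
          - 1 / Real.sqrt (-Real.log y + Real.log 2)))
      (nhdsWithin 0 (Set.Ioi 0)) (nhds 0) := by
  have hsmall : ∀ᶠ ε in 𝓝[>] (0 : ℝ), ε ∈ Ioo 0 1 := Ioo_mem_nhdsGT one_pos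
  refine squeeze_zero' ?_ ?_ tendsto_integral_bound
  · filter_upwards [hsmall] with ε ⟨hε0, hε1⟩
    exact intervalIntegral.integral_nonneg hε1.le fun y hy => integrand_nonneg hε0.le
      (hε0.trans_le hy.1) (neg_log_add_log_two_pos (by linarith [hy.1]) (by linarith [hy.2]))
  · filter_upwards [hsmall] with ε ⟨hε0, hε1⟩
    exact integral_integrand_le_of_lt_one hε0 hε1
end

section
/- Let u(x) = χ_{[0,∞)}(x)·φ(x)/√(−ln(x/2)), where φ ∈ C_c^∞(ℝ) satisfies φ = 1 on (−1−ζ, 1+ζ), φ = 0 outside (−1−2ζ, 1+2ζ), and 0 ≤ φ ≤ 1, with 0 < ζ < 1/4. Then ∫_{−ε}^{ε} |u(ε) − u(y+ε)|/|y| dy → 0 as ε → 0⁺. -/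
open Real Filter MeasureTheory intervalIntegral

lemma aux_sqrt_diff {A a b : ℝ} (hA : 0 < A) (ha : A ≤ a) (hb : A ≤ b) :
    |1 / Real.sqrt a - 1 / Real.sqrt b| ≤ |a - b| / (2 * A * Real.sqrt A) := by
  have ha0 : 0 < a := hA.trans_le ha
  have hb0 : 0 < b := hA.trans_le hb
  have hp : 0 < Real.sqrt a := Real.sqrt_pos.mpr ha0
  have hq : 0 < Real.sqrt b := Real.sqrt_pos.mpr hb0
  have hsA : 0 < Real.sqrt A := Real.sqrt_pos.mpr hA
  set p := Real.sqrt a with hpdef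
  set q := Real.sqrt b with hqdef
  have hp2 : p * p = a := Real.mul_self_sqrt ha0.le
  have hq2 : q * q = b := Real.mul_self_sqrt hb0.le
  have e0 : 1 / p - 1 / q = (q - p) / (p * q) := by field_simp
  have e1 : |1 / p - 1 / q| = |q - p| / (p * q) := by
    rw [e0, abs_div, abs_of_pos (mul_pos hp hq)]
  have e2 : |q - p| * (q + p) = |a - b| := by
    have h' : |q - p| * (q + p) = |(q - p) * (q + p)| := by
      rw [abs_mul, abs_of_pos (by positivity : (0:ℝ) < q + p)]
    rw [h']
    have h'' : (q - p) * (q + p) = b - a := by nlinarith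
    rw [h'', abs_sub_comm]
  have e3 : |1 / p - 1 / q| = |a - b| / ((q + p) * (p * q)) := by
    rw [e1, ← e2]
    field_simp
  rw [e3]
  apply div_le_div_of_nonneg_left (abs_nonneg _) (by positivity)
  have hpA : Real.sqrt A ≤ p := Real.sqrt_le_sqrt ha
  have hqA : Real.sqrt A ≤ q := Real.sqrt_le_sqrt hb
  have hAA : Real.sqrt A * Real.sqrt A = A := Real.mul_self_sqrt hA.le
  nlinarith

lemma aux_log_ineq {s : ℝ} (h1 : -1 < s) (h2 : s ≤ 1) :
    |Real.log (1 + s)| ≤ (3 - 2 * Real.log (1 + s)) * |s| := by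
  have hpos : 0 < 1 + s := by linarith
  rcases le_or_gt 0 s with hs | hs
  · have hl0 : 0 ≤ Real.log (1 + s) := Real.log_nonneg (by linarith)
    have hls : Real.log (1 + s) ≤ s := by
      have := Real.log_le_sub_one_of_pos hpos
      linarith
    have hl1 : Real.log (1 + s) ≤ 1 := by
      calc Real.log (1 + s) ≤ Real.log 2 := by
            rw [Real.log_le_log_iff hpos (by norm_num)]; linarith
        _ ≤ 1 := by
          have := Real.log_le_sub_one_of_pos (by norm_num : (0:ℝ) < 2)
          linarith
    rw [abs_of_nonneg hl0, abs_of_nonneg hs]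
    nlinarith
  · have hl0 : Real.log (1 + s) < 0 := Real.log_neg hpos (by linarith)
    rw [abs_of_neg hl0, abs_of_neg hs]
    set l := Real.log (1 + s) with hl
    rcases le_or_gt (1/2 : ℝ) (1 + s) with hc | hc
    · have hinv : -l ≤ (1 + s)⁻¹ - 1 := by
        have := Real.log_le_sub_one_of_pos (inv_pos.mpr hpos)
        rwa [Real.log_inv] at this
      have h2' : (1 + s)⁻¹ ≤ 2 := by
        rw [inv_le_comm₀ (by linarith) (by norm_num)]
        linarith
      have hfrac : -l ≤ 2 * (-s) := by
        have hinv2 : (1 + s) * (1 + s)⁻¹ = 1 := mul_inv_cancel₀ hpos.ne'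
        nlinarith
      nlinarith
    · nlinarith

lemma aux_sqrt_tendsto : Tendsto Real.sqrt atTop atTop := by
  apply tendsto_atTop_atTop_of_monotone (fun a b h => Real.sqrt_le_sqrt h)
  intro b
  exact ⟨b ^ 2, by rw [Real.sqrt_sq_eq_abs]; exact le_abs_self b⟩

theorem stmt_7 (ζ : ℝ) (hζ0 : 0 < ζ) (hζ1 : ζ < 1 / 4)
    (φ : ℝ → ℝ) (hφs : ContDiff ℝ (⊤ : ℕ∞) φ) (hφc : HasCompactSupport φ)
    (hφe : ∀ x, φ (-x) = φ x)
    (hφ1 : ∀ x ∈ Set.Ioo (-1 - ζ) (1 + ζ), φ x = 1)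
    (hφ0 : ∀ x, x ∉ Set.Ioo (-1 - 2 * ζ) (1 + 2 * ζ) → φ x = 0)
    (hφb : ∀ x, 0 ≤ φ x ∧ φ x ≤ 1)
    (u : ℝ → ℝ)
    (hu : ∀ x, u x = if 0 < x then φ x / Real.sqrt (Real.log 2 - Real.log x) else 0) :
    Filter.Tendsto
      (fun ε : ℝ => ∫ y in (-ε)..ε, |u ε - u (y + ε)| / |y|)
      (nhdsWithin 0 (Set.Ioi 0)) (nhds 0) := by
  -- measurability of u
  have hum : Measurable u := by
    have hufun : u = fun x => if 0 < x then φ x / Real.sqrt (Real.log 2 - Real.log x) else 0 :=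
      funext hu
    rw [hufun]
    refine Measurable.ite ?_ ?_ measurable_const
    · exact measurableSet_lt measurable_const measurable_id
    · exact (hφs.continuous.measurable).div
        (Real.continuous_sqrt.measurable.comp (measurable_const.sub Real.measurable_log))
  -- the upper bound function and its limit
  have h1 : Tendsto (fun ε : ℝ => -Real.log ε) (nhdsWithin 0 (Set.Ioi 0)) atTop := by
    exact tendsto_neg_atBot_atTop.comp Real.tendsto_log_nhdsGT_zero
  have hsq : Tendsto (fun ε : ℝ => Real.sqrt (-Real.log ε)) (nhdsWithin 0 (Set.Ioi 0)) atTop :=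
    aux_sqrt_tendsto.comp h1
  have ht1 : Tendsto (fun ε : ℝ => 2 / Real.sqrt (-Real.log ε))
      (nhdsWithin 0 (Set.Ioi 0)) (nhds 0) := tendsto_const_nhds.div_atTop hsq
  have hprod : Tendsto (fun ε : ℝ => 2 * (-Real.log ε) * Real.sqrt (-Real.log ε))
      (nhdsWithin 0 (Set.Ioi 0)) atTop := by
    have := (h1.atTop_mul_atTop₀ hsq).const_mul_atTop (show (0:ℝ) < 2 by norm_num)
    simpa [mul_assoc] using this
  have ht2 : Tendsto (fun ε : ℝ => (15/2 - 5 * Real.log 2) /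
      (2 * (-Real.log ε) * Real.sqrt (-Real.log ε))) (nhdsWithin 0 (Set.Ioi 0)) (nhds 0) :=
    tendsto_const_nhds.div_atTop hprod
  have hBtend : Tendsto (fun ε : ℝ => 2 / Real.sqrt (-Real.log ε) +
      (15/2 - 5 * Real.log 2) / (2 * (-Real.log ε) * Real.sqrt (-Real.log ε)))
      (nhdsWithin 0 (Set.Ioi 0)) (nhds 0) := by
    simpa using ht1.add ht2
  have hmem : Set.Ioo (0:ℝ) (1/2) ∈ nhdsWithin (0:ℝ) (Set.Ioi 0) :=
    Ioo_mem_nhdsGT_of_mem ⟨le_refl 0, by norm_num⟩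
  refine tendsto_of_tendsto_of_tendsto_of_le_of_le' tendsto_const_nhds hBtend ?_ ?_
  · -- lower bound
    filter_upwards [hmem] with ε hε
    exact intervalIntegral.integral_nonneg (by linarith [hε.1] : -ε ≤ ε)
      (fun y _ => div_nonneg (abs_nonneg _) (abs_nonneg _))
  · -- upper bound
    filter_upwards [hmem] with ε hε
    obtain ⟨hε0, hε2⟩ := hε
    set A := -Real.log ε with hAdef
    have hlogneg : Real.log ε < 0 := Real.log_neg hε0 (by linarith)
    have hA : 0 < A := by rw [hAdef]; linarith
    have hsA : 0 < Real.sqrt A := Real.sqrt_pos.mpr hA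
    have hl2 : (0:ℝ) ≤ Real.log 2 := Real.log_nonneg one_le_two
    have hD : 0 < ε * (2 * A * Real.sqrt A) := by positivity
    -- bounds on u
    have hunn : ∀ t : ℝ, t ≤ 2*ε → 0 ≤ u t ∧ u t ≤ 1 / Real.sqrt A := by
      intro t ht
      rcases le_or_gt t 0 with h | h
      · rw [hu t, if_neg (by linarith)]
        exact ⟨le_refl 0, by positivity⟩
      · have hb : A ≤ Real.log 2 - Real.log t := by
          have hlt : Real.log t ≤ Real.log (2*ε) := by
            rw [Real.log_le_log_iff h (by linarith)]; exact ht
          rw [Real.log_mul two_ne_zero hε0.ne'] at hlt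
          rw [hAdef]; linarith
        have hbpos : 0 < Real.log 2 - Real.log t := lt_of_lt_of_le hA hb
        rw [hu t, if_pos h]
        have hsb : 0 < Real.sqrt (Real.log 2 - Real.log t) := Real.sqrt_pos.mpr hbpos
        refine ⟨div_nonneg (hφb t).1 hsb.le, ?_⟩
        exact div_le_div₀ (by norm_num) (hφb t).2 hsA (Real.sqrt_le_sqrt hb)
    have huval : ∀ t : ℝ, 0 < t → t ≤ 2*ε →
        u t = 1 / Real.sqrt (Real.log 2 - Real.log t) := by
      intro t h0 h1'
      rw [hu t, if_pos h0, hφ1 t ⟨by linarith, by linarith⟩]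
    -- pointwise bound on (-ε, ε]
    have hpt : ∀ y : ℝ, -ε < y → y ≤ ε →
        |u ε - u (y + ε)| / |y| ≤
          (3 + 2*Real.log ε - 2*Real.log (y + ε)) / (ε * (2 * A * Real.sqrt A)) := by
      intro y hy1 hy2
      have ht0 : 0 < y + ε := by linarith
      have ht2 : y + ε ≤ 2*ε := by linarith
      have hue : u ε = 1 / Real.sqrt (Real.log 2 - Real.log ε) := huval ε hε0 (by linarith)
      have hut : u (y+ε) = 1 / Real.sqrt (Real.log 2 - Real.log (y+ε)) := huval _ ht0 ht2
      have haA : A ≤ Real.log 2 - Real.log ε := by rw [hAdef]; linarith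
      have hbA : A ≤ Real.log 2 - Real.log (y+ε) := by
        have hlt : Real.log (y+ε) ≤ Real.log (2*ε) := by
          rw [Real.log_le_log_iff ht0 (by linarith)]; exact ht2
        rw [Real.log_mul two_ne_zero hε0.ne'] at hlt
        rw [hAdef]; linarith
      have hd1 : |u ε - u (y+ε)| ≤ |Real.log (y+ε) - Real.log ε| / (2*A*Real.sqrt A) := by
        rw [hue, hut]
        have h' := aux_sqrt_diff hA haA hbA
        have heq : |(Real.log 2 - Real.log ε) - (Real.log 2 - Real.log (y+ε))|
            = |Real.log (y+ε) - Real.log ε| := by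
          rw [show (Real.log 2 - Real.log ε) - (Real.log 2 - Real.log (y+ε))
              = Real.log (y+ε) - Real.log ε by ring]
        rwa [heq] at h'
      have hs1 : -1 < y/ε := by
        rw [neg_lt, ← neg_div, div_lt_one hε0]; linarith
      have hs2 : y/ε ≤ 1 := by rw [div_le_one hε0]; linarith
      have hlog1s : Real.log (1 + y/ε) = Real.log (y+ε) - Real.log ε := by
        rw [show (1 + y/ε) = (y+ε)/ε by field_simp; ring]
        exact Real.log_div ht0.ne' hε0.ne'
      have hkey := aux_log_ineq hs1 hs2
      rw [hlog1s, abs_div, abs_of_pos hε0] at hkey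
      -- hkey : |log (y+ε) - log ε| ≤ (3 - 2*(log (y+ε) - log ε)) * (|y| / ε)
      have hNeq : 3 - 2*(Real.log (y+ε) - Real.log ε)
          = 3 + 2*Real.log ε - 2*Real.log (y+ε) := by ring
      rw [hNeq] at hkey
      set N := 3 + 2*Real.log ε - 2*Real.log (y+ε) with hN
      have hNpos : 0 < N := by
        have hll : Real.log (y+ε) - Real.log ε ≤ 1 := by
          rw [← hlog1s]
          calc Real.log (1 + y/ε) ≤ Real.log 2 := by
                rw [Real.log_le_log_iff (by linarith) (by norm_num)]; linarith
            _ ≤ 1 := by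
              have := Real.log_le_sub_one_of_pos (by norm_num : (0:ℝ) < 2)
              linarith
        rw [hN]; linarith
      rcases eq_or_ne y 0 with rfl | hy0
      · rw [zero_add, sub_self, abs_zero, zero_div]
        exact div_nonneg hNpos.le hD.le
      · have hay : 0 < |y| := abs_pos.mpr hy0
        rw [div_le_div_iff₀ hay hD]
        have h3 : |u ε - u (y+ε)| * (2*A*Real.sqrt A) ≤ |Real.log (y+ε) - Real.log ε| :=
          (le_div_iff₀ (by positivity)).mp hd1
        have hkey2 : |Real.log (y+ε) - Real.log ε| ≤ N * |y| / ε := by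
          rwa [← mul_div_assoc] at hkey
        have hkey' : |Real.log (y+ε) - Real.log ε| * ε ≤ N * |y| :=
          (le_div_iff₀ hε0).mp hkey2
        nlinarith [mul_le_mul_of_nonneg_right h3 hε0.le, abs_nonneg (Real.log (y+ε) - Real.log ε)]
    -- measurability of the integrand
    have hfm : Measurable (fun y => |u ε - u (y + ε)| / |y|) :=
      ((measurable_const.sub (hum.comp (measurable_add_const ε))).abs).div measurable_id.abs
    -- part 1 : integral over [-ε, -(ε/2)]
    have hb1 : ∀ y ∈ Set.Icc (-ε) (-(ε/2)),
        |u ε - u (y + ε)| / |y| ≤ 2 / Real.sqrt A * (2/ε) := by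
      intro y hy
      obtain ⟨hyl, hyr⟩ := hy
      have hyneg : y < 0 := lt_of_le_of_lt hyr (by linarith)
      have hyabs : ε/2 ≤ |y| := by rw [abs_of_neg hyneg]; linarith
      obtain ⟨hx0, hx1⟩ := hunn ε (by linarith)
      obtain ⟨hz0, hz1⟩ := hunn (y+ε) (by linarith)
      have hdb : |u ε - u (y+ε)| ≤ 2 / Real.sqrt A := by
        have h2A : 2 / Real.sqrt A = 1 / Real.sqrt A + 1 / Real.sqrt A := by ring
        rw [abs_sub_le_iff]
        constructor <;> [linarith; linarith]
      calc |u ε - u (y + ε)| / |y| ≤ (2 / Real.sqrt A) / (ε/2) :=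
            div_le_div₀ (by positivity) hdb (by positivity) hyabs
        _ = 2 / Real.sqrt A * (2/ε) := by field_simp
    have hint1 : IntervalIntegrable (fun y => |u ε - u (y + ε)| / |y|) volume (-ε) (-(ε/2)) := by
      apply IntervalIntegrable.mono_fun' (g := fun _ => 2 / Real.sqrt A * (2/ε))
        intervalIntegrable_const hfm.aestronglyMeasurable
      rw [Filter.EventuallyLE, ae_restrict_iff' measurableSet_uIoc]
      refine Filter.Eventually.of_forall fun y hy => ?_
      rw [Set.uIoc_of_le (by linarith : -ε ≤ -(ε/2))] at hy
      have := hb1 y (Set.Ioc_subset_Icc_self hy)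
      rwa [Real.norm_eq_abs, abs_of_nonneg (div_nonneg (abs_nonneg _) (abs_nonneg _))]
    -- part 2 : integral over [-(ε/2), ε]
    have hlogcont : ContinuousOn (fun y => Real.log (y + ε)) (Set.uIcc (-(ε/2)) ε) := by
      apply Real.continuousOn_log.comp (continuous_add_right ε).continuousOn
      intro y hy
      rw [Set.uIcc_of_le (by linarith : -(ε/2) ≤ ε)] at hy
      have h0 : 0 < y + ε := by linarith [hy.1]
      exact Set.mem_compl_singleton_iff.mpr h0.ne'
    have hlogint : IntervalIntegrable (fun y => Real.log (y + ε)) volume (-(ε/2)) ε :=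
      hlogcont.intervalIntegrable
    have hGint : IntervalIntegrable
        (fun y => (3 + 2*Real.log ε - 2*Real.log (y + ε)) / (ε * (2 * A * Real.sqrt A)))
        volume (-(ε/2)) ε := by
      exact ((intervalIntegrable_const.sub (hlogint.const_mul 2)).div_const _)
    have hint2 : IntervalIntegrable (fun y => |u ε - u (y + ε)| / |y|) volume (-(ε/2)) ε := by
      apply IntervalIntegrable.mono_fun' hGint hfm.aestronglyMeasurable
      rw [Filter.EventuallyLE, ae_restrict_iff' measurableSet_uIoc]
      refine Filter.Eventually.of_forall fun y hy => ?_
      rw [Set.uIoc_of_le (by linarith : -(ε/2) ≤ ε)] at hy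
      rw [Real.norm_eq_abs, abs_of_nonneg (div_nonneg (abs_nonneg _) (abs_nonneg _))]
      exact hpt y (by linarith [hy.1]) hy.2
    -- computing the integral of the bound on part 2
    have hlogeval : ∫ y in (-(ε/2))..ε, Real.log (y+ε)
        = 2*ε*Real.log (2*ε) - (ε/2)*Real.log (ε/2) - 2*ε + ε/2 := by
      rw [intervalIntegral.integral_comp_add_right (fun t => Real.log t) ε]
      rw [show -(ε/2) + ε = ε/2 by ring, show ε + ε = 2*ε by ring]
      rw [integral_log]
    have hIG : ∫ y in (-(ε/2))..ε,
        (3 + 2*Real.log ε - 2*Real.log (y + ε)) / (ε * (2 * A * Real.sqrt A))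
        = (15/2 - 5*Real.log 2) / (2 * A * Real.sqrt A) := by
      rw [intervalIntegral.integral_div]
      rw [intervalIntegral.integral_sub intervalIntegrable_const (hlogint.const_mul 2)]
      rw [intervalIntegral.integral_const, intervalIntegral.integral_const_mul, hlogeval]
      rw [Real.log_mul two_ne_zero hε0.ne', Real.log_div hε0.ne' two_ne_zero]
      rw [smul_eq_mul]
      rw [div_eq_div_iff (by positivity) (by positivity)]
      have hlogeps : Real.log ε = -A := by rw [hAdef]; ring
      rw [hlogeps]
      ring
    -- assembling
    have hsplit : (∫ y in (-ε)..ε, |u ε - u (y + ε)| / |y|)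
        = (∫ y in (-ε)..(-(ε/2)), |u ε - u (y + ε)| / |y|)
          + ∫ y in (-(ε/2))..ε, |u ε - u (y + ε)| / |y| :=
      (intervalIntegral.integral_add_adjacent_intervals hint1 hint2).symm
    have hI1 : (∫ y in (-ε)..(-(ε/2)), |u ε - u (y + ε)| / |y|) ≤ 2 / Real.sqrt A := by
      calc (∫ y in (-ε)..(-(ε/2)), |u ε - u (y + ε)| / |y|)
          ≤ ∫ _ in (-ε)..(-(ε/2)), 2 / Real.sqrt A * (2/ε) :=
            intervalIntegral.integral_mono_on (by linarith) hint1 intervalIntegrable_const hb1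
        _ = (-(ε/2) - -ε) • (2 / Real.sqrt A * (2/ε)) := intervalIntegral.integral_const _
        _ = 2 / Real.sqrt A := by
            rw [smul_eq_mul]
            field_simp
            ring
    have hI2 : (∫ y in (-(ε/2))..ε, |u ε - u (y + ε)| / |y|)
        ≤ (15/2 - 5*Real.log 2) / (2 * A * Real.sqrt A) := by
      rw [← hIG]
      apply intervalIntegral.integral_mono_on (by linarith) hint2 hGint
      intro y hy
      exact hpt y (by linarith [hy.1]) hy.2
    rw [hsplit]
    have : 2 / Real.sqrt A + (15/2 - 5*Real.log 2) / (2 * A * Real.sqrt A)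
        = 2 / Real.sqrt (-Real.log ε) +
          (15/2 - 5 * Real.log 2) / (2 * (-Real.log ε) * Real.sqrt (-Real.log ε)) := by
      rw [hAdef]
    linarith [hI1, hI2]
end

section
/- Let u(x) = χ_{[0,∞)}(x)·φ(x)/√(−ln(x/2)) with φ a smooth even cutoff equal to 1 on (−1−ζ, 1+ζ) and 0 outside (−1−2ζ, 1+2ζ), 0 ≤ φ ≤ 1, where 0 < ζ < (√(ln 2)/4)·√(ln(4/3)). Then for every ε ∈ (0, 2ζ), ∫_{ℝ\(−1,1)} u(ε+y)/|y| dy < (1/2)√(ln 2). -/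
open MeasureTheory Real Set

theorem stmt_8 (ζ : ℝ) (hζ0 : 0 < ζ)
    (hζ1 : ζ < Real.sqrt (Real.log 2) / 4 * Real.sqrt (Real.log (4 / 3)))
    (φ : ℝ → ℝ) (hφs : ContDiff ℝ (⊤ : ℕ∞) φ) (hφc : HasCompactSupport φ)
    (hφe : ∀ x, φ (-x) = φ x)
    (hφ1 : ∀ x ∈ Set.Ioo (-1 - ζ) (1 + ζ), φ x = 1)
    (hφ0 : ∀ x, x ∉ Set.Ioo (-1 - 2 * ζ) (1 + 2 * ζ) → φ x = 0)
    (hφb : ∀ x, 0 ≤ φ x ∧ φ x ≤ 1)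
    (u : ℝ → ℝ)
    (hu : ∀ x, u x = if 0 < x then φ x / Real.sqrt (Real.log 2 - Real.log x) else 0)
    (ε : ℝ) (hε : ε ∈ Set.Ioo 0 (2 * ζ)) :
    ∫ y in (Set.Ioo (-1 : ℝ) 1)ᶜ, u (ε + y) / |y| < (1 / 2) * Real.sqrt (Real.log 2) := by
  obtain ⟨hε0, hε2⟩ := hε
  have hlog2 : (0:ℝ) < Real.log 2 := Real.log_pos (by norm_num)
  have hlog43 : (0:ℝ) < Real.log (4/3) := Real.log_pos (by norm_num)
  have hexp : (2.7182818283 : ℝ) < Real.exp 1 := Real.exp_one_gt_d9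
  have hl2lt1 : Real.log 2 < 1 := by
    rw [show (1:ℝ) = Real.log (Real.exp 1) by rw [Real.log_exp]]
    exact Real.log_lt_log (by norm_num) (by linarith)
  have hl43lt1 : Real.log (4/3) < 1 := by
    rw [show (1:ℝ) = Real.log (Real.exp 1) by rw [Real.log_exp]]
    exact Real.log_lt_log (by norm_num) (by linarith)
  have hs2lt1 : Real.sqrt (Real.log 2) < 1 := by
    rw [show (1:ℝ) = Real.sqrt 1 by simp]
    exact Real.sqrt_lt_sqrt (le_of_lt hlog2) hl2lt1
  have hs43lt1 : Real.sqrt (Real.log (4/3)) < 1 := by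
    rw [show (1:ℝ) = Real.sqrt 1 by simp]
    exact Real.sqrt_lt_sqrt (le_of_lt hlog43) hl43lt1
  have hs2nn : 0 ≤ Real.sqrt (Real.log 2) := Real.sqrt_nonneg _
  have hs43nn : 0 ≤ Real.sqrt (Real.log (4/3)) := Real.sqrt_nonneg _
  have hζ14 : ζ < 1/4 := by nlinarith
  set A : ℝ := Real.log 2 - Real.log (1 + 2*ζ) with hAdef
  have hA43 : Real.log (4/3) ≤ A := by
    have h1 : Real.log (1 + 2*ζ) ≤ Real.log (3/2) :=
      Real.log_le_log (by linarith) (by linarith)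
    have h2 : Real.log 2 - Real.log (3/2) = Real.log (4/3) := by
      rw [← Real.log_div (by norm_num) (by norm_num)]; norm_num
    simp only [hAdef]; linarith
  have hA0 : 0 < A := lt_of_lt_of_le hlog43 hA43
  have hsA0 : 0 < Real.sqrt A := Real.sqrt_pos.mpr hA0
  -- key numeric bound
  have key : (2*ζ) * (Real.sqrt A)⁻¹ < 1/2 * Real.sqrt (Real.log 2) := by
    have h1 : Real.sqrt (Real.log (4/3)) ≤ Real.sqrt A := Real.sqrt_le_sqrt hA43
    have h2 : 2*ζ < 1/2 * Real.sqrt (Real.log 2) * Real.sqrt A := by nlinarith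
    rw [← div_eq_mul_inv, div_lt_iff₀ hsA0]
    linarith
  have hu0 : ∀ x, 0 ≤ u x := by
    intro x
    rw [hu]
    split_ifs
    · exact div_nonneg (hφb x).1 (Real.sqrt_nonneg _)
    · exact le_refl 0
  have hbound : ∀ y ∈ (Set.Ioo (-1:ℝ) 1)ᶜ,
      u (ε+y) / |y| ≤ Set.indicator (Set.Icc 1 (1+2*ζ)) (fun _ => (Real.sqrt A)⁻¹) y := by
    intro y hy
    rw [Set.mem_compl_iff, Set.mem_Ioo, not_and_or, not_lt, not_lt] at hy
    by_cases hyI : y ∈ Set.Icc (1:ℝ) (1+2*ζ)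
    · rw [Set.indicator_of_mem hyI]
      obtain ⟨hy1, hy2⟩ := hyI
      have habs : |y| = y := abs_of_pos (by linarith)
      have hub : u (ε + y) ≤ (Real.sqrt A)⁻¹ := by
        rw [hu, if_pos (by linarith)]
        by_cases hcase : ε + y < 1 + 2*ζ
        · have hlogle : Real.log (ε+y) ≤ Real.log (1+2*ζ) :=
            Real.log_le_log (by linarith) (le_of_lt hcase)
          have hsqle : Real.sqrt A ≤ Real.sqrt (Real.log 2 - Real.log (ε+y)) := by
            apply Real.sqrt_le_sqrt; simp only [hAdef]; linarith
          rw [← one_div]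
          exact div_le_div₀ zero_le_one (hφb _).2 hsA0 hsqle
        · rw [hφ0 (ε+y) (by rw [Set.mem_Ioo]; push_neg; intro _; linarith), zero_div]
          positivity
      calc u (ε+y) / |y| ≤ u (ε+y) := by rw [habs]; exact div_le_self (hu0 _) hy1
        _ ≤ _ := hub
    · rw [Set.indicator_of_notMem hyI]
      have hz : u (ε + y) = 0 := by
        rcases hy with h | h
        · rw [hu, if_neg (not_lt.mpr (by linarith))]
        · have hy2 : 1 + 2*ζ < y := by
            by_contra hc
            push_neg at hc
            exact hyI ⟨h, hc⟩
          rw [hu, if_pos (by linarith),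
            hφ0 (ε+y) (by rw [Set.mem_Ioo]; push_neg; intro _; linarith), zero_div]
      rw [hz, zero_div]
  have hScompl : MeasurableSet ((Set.Ioo (-1:ℝ) 1)ᶜ) := measurableSet_Ioo.compl
  have hIcc : MeasurableSet (Set.Icc (1:ℝ) (1+2*ζ)) := measurableSet_Icc
  have hInt : Integrable (Set.indicator (Set.Icc (1:ℝ) (1+2*ζ)) (fun _ => (Real.sqrt A)⁻¹))
      (volume.restrict ((Set.Ioo (-1:ℝ) 1)ᶜ)) := by
    apply Integrable.restrict
    rw [integrable_indicator_iff hIcc]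
    exact integrableOn_const measure_Icc_lt_top.ne
  have hsub : Set.Icc (1:ℝ) (1+2*ζ) ∩ (Set.Ioo (-1:ℝ) 1)ᶜ = Set.Icc (1:ℝ) (1+2*ζ) := by
    apply Set.inter_eq_left.mpr
    intro y hy
    rw [Set.mem_Icc] at hy
    rw [Set.mem_compl_iff, Set.mem_Ioo, not_and_or, not_lt, not_lt]
    exact Or.inr hy.1
  calc ∫ y in (Set.Ioo (-1:ℝ) 1)ᶜ, u (ε + y) / |y|
      ≤ ∫ y in (Set.Ioo (-1:ℝ) 1)ᶜ,
          Set.indicator (Set.Icc 1 (1+2*ζ)) (fun _ => (Real.sqrt A)⁻¹) y := by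
        apply integral_mono_of_nonneg
        · exact ae_of_all _ (fun y => div_nonneg (hu0 _) (abs_nonneg _))
        · exact hInt
        · exact (ae_restrict_iff' hScompl).mpr (ae_of_all _ hbound)
    _ = ∫ _ in Set.Icc (1:ℝ) (1+2*ζ), (Real.sqrt A)⁻¹ := by
        rw [integral_indicator hIcc, Measure.restrict_restrict hIcc, hsub]
    _ = (2*ζ) * (Real.sqrt A)⁻¹ := by
        rw [setIntegral_const, Real.volume_real_Icc_of_le (by linarith)]
        rw [smul_eq_mul]
        ring
    _ < 1/2 * Real.sqrt (Real.log 2) := key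
end

section
/- Let x ∈ ℝ^N with |x| ≥ 1, x* = x/|x|², P = 4x/(4|x|² − 1), ρ = 2/(4|x|² − 1), and σ = (2|x| − 1)/(|x|(4|x|² − 1)). Then B_σ(x*) ⊆ B_ρ(P), and 0 < σ ≤ ρ < 1. -/
/-! The point `P` lies on the ray through `x* = x / |x|²`, at distance `1 / (|x| (4|x|² - 1))` from
it, and this distance is exactly `ρ - σ`; so the ball `B_σ(x*)` fits inside `B_ρ(P)` by the triangle
inequality. The numerical bounds are elementary once `|x| ≥ 1`. -/

section InversionBalls

variable {E : Type*} [SeminormedAddCommGroup E] [NormedSpace ℝ E]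

theorem dist_smul_smul_right (a b : ℝ) (x : E) : dist (a • x) (b • x) = |a - b| * ‖x‖ := by
  rw [dist_eq_norm, ← sub_smul, norm_smul, Real.norm_eq_abs]

theorem dist_inversion_four_div_smul {x : E} (hx : 1 / 2 < ‖x‖) :
    dist ((‖x‖ ^ 2)⁻¹ • x) ((4 / (4 * ‖x‖ ^ 2 - 1)) • x) = 1 / (‖x‖ * (4 * ‖x‖ ^ 2 - 1)) := by
  have hr : 0 < ‖x‖ := by linarith
  have hq : 0 < 4 * ‖x‖ ^ 2 - 1 := by nlinarith
  have hcoeff : (‖x‖ ^ 2)⁻¹ - 4 / (4 * ‖x‖ ^ 2 - 1) = -(1 / (‖x‖ ^ 2 * (4 * ‖x‖ ^ 2 - 1))) := by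
    rw [inv_eq_one_div, div_sub_div _ _ (by positivity) hq.ne', ← neg_div]
    ring
  rw [dist_smul_smul_right, hcoeff, abs_neg, abs_of_pos (by positivity)]
  field_simp

theorem ball_inversion_subset_ball {x : E} (hx : 1 / 2 < ‖x‖) :
    Metric.ball ((‖x‖ ^ 2)⁻¹ • x) ((2 * ‖x‖ - 1) / (‖x‖ * (4 * ‖x‖ ^ 2 - 1))) ⊆
      Metric.ball ((4 / (4 * ‖x‖ ^ 2 - 1)) • x) (2 / (4 * ‖x‖ ^ 2 - 1)) := by
  have hr : 0 < ‖x‖ := by linarith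
  have hq : 0 < 4 * ‖x‖ ^ 2 - 1 := by nlinarith
  refine Metric.ball_subset_ball' (le_of_eq ?_)
  rw [dist_inversion_four_div_smul hx]
  field_simp
  ring

end InversionBalls

theorem inversion_radius_pos {r : ℝ} (hr : 1 / 2 < r) : 0 < (2 * r - 1) / (r * (4 * r ^ 2 - 1)) :=
  div_pos (by linarith) (mul_pos (by linarith) (by nlinarith))

theorem inversion_radius_le {r : ℝ} (hr : 1 / 2 < r) :
    (2 * r - 1) / (r * (4 * r ^ 2 - 1)) ≤ 2 / (4 * r ^ 2 - 1) := by
  have hq : 0 < 4 * r ^ 2 - 1 := by nlinarith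
  rw [div_le_div_iff₀ (mul_pos (by linarith) hq) hq]
  nlinarith

theorem two_div_four_mul_sq_sub_one_lt_one {r : ℝ} (hr : 1 ≤ r) : 2 / (4 * r ^ 2 - 1) < 1 := by
  rw [div_lt_one (by nlinarith)]
  nlinarith

theorem stmt_14_general (N : ℕ) (x : EuclideanSpace ℝ (Fin N)) (hx : 1 ≤ ‖x‖) :
    Metric.ball ((‖x‖ ^ 2)⁻¹ • x) ((2 * ‖x‖ - 1) / (‖x‖ * (4 * ‖x‖ ^ 2 - 1))) ⊆
        Metric.ball (((4 : ℝ) / (4 * ‖x‖ ^ 2 - 1)) • x) (2 / (4 * ‖x‖ ^ 2 - 1)) ∧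
      0 < (2 * ‖x‖ - 1) / (‖x‖ * (4 * ‖x‖ ^ 2 - 1)) ∧
      (2 * ‖x‖ - 1) / (‖x‖ * (4 * ‖x‖ ^ 2 - 1)) ≤ 2 / (4 * ‖x‖ ^ 2 - 1) ∧
      2 / (4 * ‖x‖ ^ 2 - 1) < 1 := by
  have hx' : 1 / 2 < ‖x‖ := by linarith
  exact ⟨ball_inversion_subset_ball hx', inversion_radius_pos hx', inversion_radius_le hx',
    two_div_four_mul_sq_sub_one_lt_one hx⟩

theorem stmt_14 (N : ℕ) (hN : 1 ≤ N) (x : EuclideanSpace ℝ (Fin N)) (hx : 1 ≤ ‖x‖) :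
    Metric.ball ((‖x‖ ^ 2)⁻¹ • x) ((2 * ‖x‖ - 1) / (‖x‖ * (4 * ‖x‖ ^ 2 - 1))) ⊆
        Metric.ball (((4 : ℝ) / (4 * ‖x‖ ^ 2 - 1)) • x) (2 / (4 * ‖x‖ ^ 2 - 1)) ∧
      0 < (2 * ‖x‖ - 1) / (‖x‖ * (4 * ‖x‖ ^ 2 - 1)) ∧
      (2 * ‖x‖ - 1) / (‖x‖ * (4 * ‖x‖ ^ 2 - 1)) ≤ 2 / (4 * ‖x‖ ^ 2 - 1) ∧
      2 / (4 * ‖x‖ ^ 2 - 1) < 1 :=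
  stmt_14_general N x hx
end
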